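/- Let m ≥ 1, let M, N ⊆ [m] with |M|+|N| ≥ 1, and let D = aΔ_M + cΔ_N ⊆ E^m. Then the linear right-E-code C^R_D has length |D| = 2^{|M|+|N|} and size |C^R_D| = 2^{|M∪N|}, and the multiset {wt_Lee(c^R_D(v)) : v ∈ E^m} (with multiplicity over all 2^{2m} elements v ∈ E^m) consists of: 2^{|M|+|N|} with multiplicity 2^m(2^m−2^{m−|N|}); 2^{|M|+|N|−1} with multiplicity 2^m(2^{m−|N|}−2^{m−|M∪N|}); and 0 with multiplicity 2^{2m−|M∪N|}. -/

import Mathlib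

open Finset

/-- The simplicial complex `Δ_M ⊆ 𝔽₂^m` generated by `M ⊆ [m]`:
all vectors whose support is contained in `M`. -/
def deltaC {m : ℕ} (M : Finset (Fin m)) : Finset (Fin m → ZMod 2) :=
  Finset.univ.filter (fun w => ∀ i, w i ≠ 0 → i ∈ M)

/-- Dot product over `𝔽₂`. -/
def dotp {m : ℕ} (x y : Fin m → ZMod 2) : ZMod 2 := ∑ i, x i * y i

/-- The Gray map on a single element `a·s + c·t ↔ (s, t)` of `E = 𝔽₂ × 𝔽₂`:
`Φ(as + ct) = (t, s + t)`. -/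
def grayPair (e : ZMod 2 × ZMod 2) : Fin 2 → ZMod 2 := ![e.2, e.1 + e.2]

/-- The left codeword `c^L_D(v)` for `v = aα + cβ ↔ (α, β)`:
its coordinate at `d = (t₁, t₂) ∈ D` is `a(α·t₁) + c(β·t₁) ↔ (α·t₁, β·t₁)`. -/
def cwL {m : ℕ} (Ds : Finset ((Fin m → ZMod 2) × (Fin m → ZMod 2)))
    (v : (Fin m → ZMod 2) × (Fin m → ZMod 2)) :
    {d // d ∈ Ds} → ZMod 2 × ZMod 2 :=
  fun d => (dotp v.1 d.1.1, dotp v.2 d.1.1)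

/-- The Gray image `Φ(c^L_D(v)) ∈ 𝔽₂^{2|D|}` of the left codeword `c^L_D(v)`;
its Hamming weight (`hammingNorm`) is the Lee weight of `c^L_D(v)`. -/
def gcwL {m : ℕ} (Ds : Finset ((Fin m → ZMod 2) × (Fin m → ZMod 2)))
    (v : (Fin m → ZMod 2) × (Fin m → ZMod 2)) :
    {d // d ∈ Ds} × Fin 2 → ZMod 2 :=
  fun x => grayPair (cwL Ds v x.1) x.2

/-- The right codeword `c^R_D(v)` for `v = aα + cβ ↔ (α, β)`:
its coordinate at `d = (t₁, t₂) ∈ D` is `a(t₁·α) + c(t₂·α) ↔ (t₁·α, t₂·α)`. -/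
def cwR {m : ℕ} (Ds : Finset ((Fin m → ZMod 2) × (Fin m → ZMod 2)))
    (v : (Fin m → ZMod 2) × (Fin m → ZMod 2)) :
    {d // d ∈ Ds} → ZMod 2 × ZMod 2 :=
  fun d => (dotp d.1.1 v.1, dotp d.1.2 v.1)

/-- The Gray image `Φ(c^R_D(v)) ∈ 𝔽₂^{2|D|}` of the right codeword `c^R_D(v)`;
its Hamming weight (`hammingNorm`) is the Lee weight of `c^R_D(v)`. -/
def gcwR {m : ℕ} (Ds : Finset ((Fin m → ZMod 2) × (Fin m → ZMod 2)))
    (v : (Fin m → ZMod 2) × (Fin m → ZMod 2)) :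
    {d // d ∈ Ds} × Fin 2 → ZMod 2 :=
  fun x => grayPair (cwR Ds v x.1) x.2

/-!
Write `v = aα + cβ`. The right codeword depends on `α` alone, and the unit vectors in `Δ_M` and
`Δ_N` read off `α` on `M ∪ N`, which in turn determines it; this gives `2 ^ |M ∪ N|` codewords.
The Gray image of the coordinate `(t₁ ⬝ α, t₂ ⬝ α)` has weight `[t₂ ⬝ α ≠ 0] + [t₂ ⬝ α ≠ t₁ ⬝ α]`,
and a linear form not vanishing on `S` is balanced on `Δ_S`. So the Lee weight is `|D|` if `α`
does not vanish on `N`, `|D| / 2` if it vanishes on `N` but not on `M` (only the half of the rows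
with `t₁ ⬝ α ≠ 0` contribute, each with `|Δ_N|`), and `0` otherwise; the multiplicities count the
`α` of each kind, `β` being free.
-/

lemma Finset.card_image_eq_card_image_of_iff {α β γ : Type*} [DecidableEq β] [DecidableEq γ]
    {s : Finset α} {f : α → β} {g : α → γ} (h : ∀ a ∈ s, ∀ b ∈ s, f a = f b ↔ g a = g b) :
    #(s.image f) = #(s.image g) := by
  have hf : #((s.image fun a => (f a, g a)).image Prod.fst) = #(s.image fun a => (f a, g a)) :=
    card_image_of_injOn <| by
      intro x hx y hy hxy
      obtain ⟨a, ha, rfl⟩ := mem_image.1 hx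
      obtain ⟨b, hb, rfl⟩ := mem_image.1 hy
      exact Prod.ext hxy ((h a ha b hb).1 hxy)
  have hg : #((s.image fun a => (f a, g a)).image Prod.snd) = #(s.image fun a => (f a, g a)) :=
    card_image_of_injOn <| by
      intro x hx y hy hxy
      obtain ⟨a, ha, rfl⟩ := mem_image.1 hx
      obtain ⟨b, hb, rfl⟩ := mem_image.1 hy
      exact Prod.ext ((h a ha b hb).2 hxy) hxy
  rw [image_image] at hf hg
  exact hf.trans hg.symm

lemma Multiset.map_ite_const {α β : Type*} (s : Multiset α) (p : α → Prop) [DecidablePred p]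
    (g : α → β) (b : β) :
    s.map (fun a => if p a then g a else b) =
      (s.filter p).map g + replicate (card (s.filter fun a => ¬ p a)) b := by
  conv_lhs => rw [← filter_add_not p s]
  rw [map_add, ← map_const']
  congr 1 <;> refine map_congr rfl fun a ha => ?_
  · rw [if_pos (of_mem_filter ha)]
  · rw [if_neg (of_mem_filter (p := fun a => ¬ p a) ha)]

lemma hammingNorm_uncurry {ι κ β : Type*} [Fintype ι] [Fintype κ] [Zero β] [DecidableEq β]
    (f : ι → κ → β) : hammingNorm (fun x : ι × κ => f x.1 x.2) = ∑ i, hammingNorm (f i) := by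
  simp only [hammingNorm, card_filter, Fintype.sum_prod_type]

lemma hammingNorm_grayPair (e : ZMod 2 × ZMod 2) :
    hammingNorm (grayPair e) = (if e.2 ≠ 0 then 1 else 0) + if e.2 ≠ e.1 then 1 else 0 := by
  revert e; decide

lemma dotp_eq_dotProduct {m : ℕ} (x y : Fin m → ZMod 2) : dotp x y = x ⬝ᵥ y := rfl

section Delta

variable {m : ℕ} {M : Finset (Fin m)}

lemma mem_deltaC {w : Fin m → ZMod 2} : w ∈ deltaC M ↔ ∀ i, w i ≠ 0 → i ∈ M := by
  simp [deltaC]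

lemma mem_deltaC_compl {w : Fin m → ZMod 2} : w ∈ deltaC Mᶜ ↔ ∀ i ∈ M, w i = 0 := by
  simp only [mem_deltaC, mem_compl]
  exact forall_congr' fun i => by tauto

lemma card_deltaC (M : Finset (Fin m)) : #(deltaC M) = 2 ^ #M := by
  have : deltaC M = Fintype.piFinset fun i => if i ∈ M then univ else {0} := by
    ext w
    simp only [mem_deltaC, Fintype.mem_piFinset]
    refine forall_congr' fun i => ?_
    split_ifs with hi <;> simp [hi]
  rw [this, Fintype.card_piFinset]
  simp [apply_ite card, prod_ite_mem]

lemma zero_mem_deltaC : (0 : Fin m → ZMod 2) ∈ deltaC M :=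
  mem_deltaC.2 fun _ h => absurd rfl h

lemma single_mem_deltaC {i : Fin m} (hi : i ∈ M) : Pi.single i 1 ∈ deltaC M :=
  mem_deltaC.2 fun j hj => by
    by_cases hji : j = i
    · exact hji ▸ hi
    · simp [hji] at hj

lemma add_single_mem_deltaC {i : Fin m} (hi : i ∈ M) {t : Fin m → ZMod 2} (ht : t ∈ deltaC M) :
    t + Pi.single i 1 ∈ deltaC M :=
  mem_deltaC.2 fun j hj => by
    by_cases hji : j = i
    · exact hji ▸ hi
    · exact mem_deltaC.1 ht j (by simpa [hji] using hj)

lemma dotp_congr_of_mem_deltaC {t α β : Fin m → ZMod 2} (ht : t ∈ deltaC M)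
    (h : ∀ i ∈ M, α i = β i) : dotp t α = dotp t β :=
  sum_congr rfl fun i _ => by
    by_cases hti : t i = 0
    · simp [hti]
    · rw [h i (mem_deltaC.1 ht i hti)]

lemma dotp_eq_zero_of_mem_deltaC {t α : Fin m → ZMod 2} (ht : t ∈ deltaC M)
    (h : ∀ i ∈ M, α i = 0) : dotp t α = 0 :=
  (dotp_congr_of_mem_deltaC ht h).trans (dotProduct_zero t)

/- Translation by the unit vector `eᵢ` of a coordinate `i ∈ M` with `αᵢ = 1` preserves `Δ_M`
and swaps the two fibres of `t ↦ t ⬝ α`. -/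
lemma card_deltaC_filter_dotp_ne {α : Fin m → ZMod 2} (hα : ∃ i ∈ M, α i ≠ 0) (c : ZMod 2) :
    #{t ∈ deltaC M | dotp t α ≠ c} = 2 ^ (#M - 1) := by
  obtain ⟨i, hi, hαi⟩ := hα
  have hone : ∀ x : ZMod 2, x ≠ 0 → x = 1 := by decide
  have hne : ∀ x : ZMod 2, x + 1 ≠ x := by decide
  have hflip : ∀ x y : ZMod 2, x ≠ y → x + 1 = y := by decide
  have hshift (t) : dotp (t + Pi.single i 1) α = dotp t α + 1 := by
    rw [dotp_eq_dotProduct, add_dotProduct, single_dotProduct, one_mul, hone _ hαi,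
      dotp_eq_dotProduct]
  have hinv (t : Fin m → ZMod 2) : t + Pi.single i 1 + Pi.single i 1 = t := by
    rw [add_assoc, ← Pi.single_add, CharTwo.add_self_eq_zero, Pi.single_zero, add_zero]
  have hswap : #{t ∈ deltaC M | dotp t α = c} = #{t ∈ deltaC M | dotp t α ≠ c} := by
    refine card_nbij' (· + Pi.single i 1) (· + Pi.single i 1) ?_ ?_ (fun t _ => hinv t)
      (fun t _ => hinv t)
    · intro t ht
      simp only [coe_filter, Set.mem_ofPred_eq] at ht ⊢
      refine ⟨add_single_mem_deltaC hi ht.1, ?_⟩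
      rw [hshift, ht.2]
      exact hne c
    · intro t ht
      simp only [coe_filter, Set.mem_ofPred_eq] at ht ⊢
      refine ⟨add_single_mem_deltaC hi ht.1, ?_⟩
      rw [hshift]
      exact hflip _ _ ht.2
  have hsplit := card_filter_add_card_filter_not (s := deltaC M) (fun t => dotp t α = c)
  have hM : 2 ^ #M = 2 * 2 ^ (#M - 1) := by
    rw [← pow_succ', Nat.sub_add_cancel (card_pos.2 ⟨i, hi⟩)]
  simp only [ne_eq] at hswap ⊢
  rw [card_deltaC, hswap] at hsplit
  omega

end Delta

section RightCode

variable {m : ℕ} (M N : Finset (Fin m))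

lemma cwR_eq_iff {v w : (Fin m → ZMod 2) × (Fin m → ZMod 2)} :
    cwR (deltaC M ×ˢ deltaC N) v = cwR (deltaC M ×ˢ deltaC N) w ↔ ∀ i ∈ M ∪ N, v.1 i = w.1 i := by
  constructor
  · intro h i hi
    rcases mem_union.1 hi with hiM | hiN
    · have hd : (Pi.single i 1, 0) ∈ deltaC M ×ˢ deltaC N :=
        mem_product.2 ⟨single_mem_deltaC hiM, zero_mem_deltaC⟩
      simpa [cwR, dotp_eq_dotProduct] using congr_arg Prod.fst (congr_fun h ⟨_, hd⟩)
    · have hd : (0, Pi.single i 1) ∈ deltaC M ×ˢ deltaC N :=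
        mem_product.2 ⟨zero_mem_deltaC, single_mem_deltaC hiN⟩
      simpa [cwR, dotp_eq_dotProduct] using congr_arg Prod.snd (congr_fun h ⟨_, hd⟩)
  · intro h
    funext ⟨⟨t₁, t₂⟩, hd⟩
    obtain ⟨ht₁, ht₂⟩ := mem_product.1 hd
    exact Prod.ext (dotp_congr_of_mem_deltaC ht₁ fun i hi => h i (mem_union_left N hi))
      (dotp_congr_of_mem_deltaC ht₂ fun i hi => h i (mem_union_right M hi))

lemma card_image_cwR :
    #((univ : Finset ((Fin m → ZMod 2) × (Fin m → ZMod 2))).image (cwR (deltaC M ×ˢ deltaC N))) =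
      2 ^ #(M ∪ N) := by
  rw [card_image_eq_card_image_of_iff (g := fun v (i : ↥(M ∪ N)) => v.1 i)]
  · have hsurj : (univ.image fun (v : (Fin m → ZMod 2) × (Fin m → ZMod 2)) (i : ↥(M ∪ N)) =>
        v.1 i) = univ :=
      eq_univ_of_forall fun β => mem_image.2
        ⟨(fun i => if hi : i ∈ M ∪ N then β ⟨i, hi⟩ else 0, 0), mem_univ _, by simp⟩
    rw [hsurj, card_univ, Fintype.card_fun, ZMod.card, Fintype.card_coe]
  · intro v _ w _
    rw [cwR_eq_iff, funext_iff, Subtype.forall]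

lemma hammingNorm_gcwR_eq_sum (v : (Fin m → ZMod 2) × (Fin m → ZMod 2)) :
    hammingNorm (gcwR (deltaC M ×ˢ deltaC N) v) =
      ∑ t₁ ∈ deltaC M, (#{t₂ ∈ deltaC N | dotp t₂ v.1 ≠ 0} +
        #{t₂ ∈ deltaC N | dotp t₂ v.1 ≠ dotp t₁ v.1}) := by
  refine (hammingNorm_uncurry fun d j => grayPair (cwR (deltaC M ×ˢ deltaC N) v d) j).trans ?_
  simp only [hammingNorm_grayPair, cwR]
  rw [sum_coe_sort (deltaC M ×ˢ deltaC N) (fun d => (if dotp d.2 v.1 ≠ 0 then 1 else 0) +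
    if dotp d.2 v.1 ≠ dotp d.1 v.1 then 1 else 0), sum_product]
  simp only [sum_add_distrib, sum_boole, Nat.cast_id]

lemma hammingNorm_gcwR (v : (Fin m → ZMod 2) × (Fin m → ZMod 2)) :
    hammingNorm (gcwR (deltaC M ×ˢ deltaC N) v) =
      if ∀ i ∈ N, v.1 i = 0 then (if ∀ i ∈ M, v.1 i = 0 then 0 else 2 ^ (#M + #N - 1))
      else 2 ^ (#M + #N) := by
  rw [hammingNorm_gcwR_eq_sum]
  split_ifs with hN hM
  · refine sum_eq_zero fun t₁ ht₁ => ?_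
    have hrow : ∀ t₂ ∈ deltaC N, dotp t₂ v.1 = dotp t₁ v.1 := fun t₂ ht₂ => by
      rw [dotp_eq_zero_of_mem_deltaC ht₂ hN, dotp_eq_zero_of_mem_deltaC ht₁ hM]
    rw [filter_false_of_mem fun t₂ ht₂ => not_not.2 (dotp_eq_zero_of_mem_deltaC ht₂ hN),
      filter_false_of_mem fun t₂ ht₂ => not_not.2 (hrow t₂ ht₂), card_empty, add_zero]
  · have hzero : ∀ t₂ ∈ deltaC N, dotp t₂ v.1 = 0 := fun t₂ ht₂ =>
      dotp_eq_zero_of_mem_deltaC ht₂ hN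
    have hrow (t₁) : #{t₂ ∈ deltaC N | dotp t₂ v.1 ≠ 0} +
        #{t₂ ∈ deltaC N | dotp t₂ v.1 ≠ dotp t₁ v.1} = if dotp t₁ v.1 ≠ 0 then 2 ^ #N else 0 := by
      have hconst : {t₂ ∈ deltaC N | dotp t₂ v.1 ≠ dotp t₁ v.1} =
          if dotp t₁ v.1 ≠ 0 then deltaC N else ∅ := by
        rw [← filter_const]
        exact filter_congr fun t₂ ht₂ => by rw [hzero t₂ ht₂, ne_comm]
      rw [filter_false_of_mem fun t₂ ht₂ => not_not.2 (hzero t₂ ht₂), hconst, apply_ite card,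
        card_empty, zero_add, card_deltaC]
    push Not at hM
    have hM1 : 1 ≤ #M := card_pos.2 (hM.imp fun _ h => h.1)
    rw [sum_congr rfl fun t₁ _ => hrow t₁, sum_ite, sum_const, sum_const_zero, add_zero,
      smul_eq_mul, card_deltaC_filter_dotp_ne hM, ← pow_add, Nat.sub_add_comm hM1]
  · push Not at hN
    have hN1 : 1 ≤ #N := card_pos.2 (hN.imp fun _ h => h.1)
    have hrow (t₁) : #{t₂ ∈ deltaC N | dotp t₂ v.1 ≠ 0} +
        #{t₂ ∈ deltaC N | dotp t₂ v.1 ≠ dotp t₁ v.1} = 2 ^ #N := by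
      rw [card_deltaC_filter_dotp_ne hN, card_deltaC_filter_dotp_ne hN, ← two_mul, ← pow_succ',
        Nat.sub_add_cancel hN1]
    rw [sum_congr rfl fun t₁ _ => hrow t₁, sum_const, card_deltaC, smul_eq_mul, pow_add]

end RightCode

section Counting

variable {m : ℕ}

lemma card_filter_forall_eq_zero (S : Finset (Fin m)) :
    #{α : Fin m → ZMod 2 | ∀ i ∈ S, α i = 0} = 2 ^ (m - #S) := by
  have : (univ.filter fun α : Fin m → ZMod 2 => ∀ i ∈ S, α i = 0) = deltaC Sᶜ := by
    ext; simp only [mem_filter, mem_univ, true_and, mem_deltaC_compl]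
  rw [this, card_deltaC, card_compl, Fintype.card_fin]

lemma card_filter_fst (p : (Fin m → ZMod 2) → Prop) [DecidablePred p] :
    #{v : (Fin m → ZMod 2) × (Fin m → ZMod 2) | p v.1} = 2 ^ m * #{α | p α} := by
  rw [← univ_product_univ, filter_product_left, card_product, card_univ,
    Fintype.card_fun, ZMod.card, Fintype.card_fin, mul_comm]

lemma map_ite_vanishing_eq_replicate {β : Type*} (M N : Finset (Fin m)) (a b z : β) :
    (univ : Finset ((Fin m → ZMod 2) × (Fin m → ZMod 2))).val.map
      (fun v => if ∀ i ∈ N, v.1 i = 0 then (if ∀ i ∈ M, v.1 i = 0 then z else b) else a) =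
      Multiset.replicate (2 ^ m * (2 ^ m - 2 ^ (m - #N))) a +
      Multiset.replicate (2 ^ m * (2 ^ (m - #N) - 2 ^ (m - #(M ∪ N)))) b +
      Multiset.replicate (2 ^ (2 * m - #(M ∪ N))) z := by
  have hN := card_filter_forall_eq_zero N
  have hMN : #{α : Fin m → ZMod 2 | (∀ i ∈ N, α i = 0) ∧ ∀ i ∈ M, α i = 0} =
      2 ^ (m - #(M ∪ N)) := by
    rw [← card_filter_forall_eq_zero]
    congr 1
    exact filter_congr fun α _ => by rw [forall_mem_union, and_comm]
  have hsplitN := card_filter_add_card_filter_not (s := univ)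
    fun α : Fin m → ZMod 2 => ∀ i ∈ N, α i = 0
  have hsplitM := card_filter_add_card_filter_not
    (s := {α : Fin m → ZMod 2 | ∀ i ∈ N, α i = 0}) fun α => ∀ i ∈ M, α i = 0
  rw [filter_filter, filter_filter, hMN, hN] at hsplitM
  rw [card_univ, Fintype.card_fun, ZMod.card, Fintype.card_fin, hN] at hsplitN
  have hle : #(M ∪ N) ≤ m := (card_le_univ _).trans_eq (Fintype.card_fin m)
  simp only [Multiset.map_ite_const, Multiset.map_const', ← filter_val, ← card_def, filter_filter]
  rw [card_filter_fst (fun α => (∀ i ∈ N, α i = 0) ∧ ∀ i ∈ M, α i = 0),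
    card_filter_fst (fun α => (∀ i ∈ N, α i = 0) ∧ ¬ ∀ i ∈ M, α i = 0),
    card_filter_fst (fun α => ¬ ∀ i ∈ N, α i = 0), hMN, ← Nat.eq_sub_of_add_eq' hsplitN,
    ← Nat.eq_sub_of_add_eq' hsplitM, ← pow_add,
    show m + (m - #(M ∪ N)) = 2 * m - #(M ∪ N) by omega]
  abel

end Counting

theorem stmt_10_general {m : ℕ} (M N : Finset (Fin m))
    (Ds : Finset ((Fin m → ZMod 2) × (Fin m → ZMod 2)))
    (hDs : Ds = deltaC M ×ˢ deltaC N) :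
    Ds.card = 2 ^ (M.card + N.card) ∧
    ((Finset.univ : Finset ((Fin m → ZMod 2) × (Fin m → ZMod 2))).image (cwR Ds)).card = 2 ^ (M ∪ N).card ∧
    (Finset.univ : Finset ((Fin m → ZMod 2) × (Fin m → ZMod 2))).val.map (fun v => hammingNorm (gcwR Ds v)) =
      Multiset.replicate (2 ^ m * (2 ^ m - 2 ^ (m - N.card)))
          (2 ^ (M.card + N.card)) +
      Multiset.replicate (2 ^ m * (2 ^ (m - N.card) - 2 ^ (m - (M ∪ N).card)))
          (2 ^ (M.card + N.card - 1)) +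
      Multiset.replicate (2 ^ (2 * m - (M ∪ N).card))
          (0) := by
  subst hDs
  refine ⟨by rw [card_product, card_deltaC, card_deltaC, pow_add], card_image_cwR M N, ?_⟩
  simp only [hammingNorm_gcwR]
  exact map_ite_vanishing_eq_replicate M N _ _ _

theorem stmt_10 {m : ℕ} (hm : 1 ≤ m) (M N : Finset (Fin m))
    (hMN : 1 ≤ M.card + N.card)
    (Ds : Finset ((Fin m → ZMod 2) × (Fin m → ZMod 2)))
    (hDs : Ds = deltaC M ×ˢ deltaC N) :
    Ds.card = 2 ^ (M.card + N.card) ∧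
    ((Finset.univ : Finset ((Fin m → ZMod 2) × (Fin m → ZMod 2))).image (cwR Ds)).card = 2 ^ (M ∪ N).card ∧
    (Finset.univ : Finset ((Fin m → ZMod 2) × (Fin m → ZMod 2))).val.map (fun v => hammingNorm (gcwR Ds v)) =
      Multiset.replicate (2 ^ m * (2 ^ m - 2 ^ (m - N.card)))
          (2 ^ (M.card + N.card)) +
      Multiset.replicate (2 ^ m * (2 ^ (m - N.card) - 2 ^ (m - (M ∪ N).card)))
          (2 ^ (M.card + N.card - 1)) +
      Multiset.replicate (2 ^ (2 * m - (M ∪ N).card))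
          (0) :=
  stmt_10_general M N Ds hDs
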